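/- Let D ⊂ C(K) be a nonempty compact set of continuous functions on a compact set K, ν a probability measure on K, and (η_i) i.i.d. with law ν. Let f⋆ minimize f ↦ ∫ f dν over D and, for each M, let f⋆_M minimize f ↦ (1/M) Σ_{i=1}^M f(η_i) over D. Then ∫ f⋆_M dν → ∫ f⋆ dν almost surely as M → ∞. -/

import Mathlib

/-!
By the strong law of large numbers, almost surely the empirical means `(1/M) Σ f(η_i)` converge
to `∫ f dν` simultaneously for all `f` in a countable dense subset of `D`. Both the empirical
means and the integral are `1`-Lipschitz in `f` for the sup norm, so this convergence is uniform
on the compact set `D`. Then for large `M`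
`∫ f⋆ ≤ ∫ f⋆_M ≤ (1/M) Σ f⋆_M(η_i) + ε ≤ (1/M) Σ f⋆(η_i) + ε ≤ ∫ f⋆ + 2ε`.
-/

open MeasureTheory ProbabilityTheory Filter Topology

theorem Equicontinuous.tendstoUniformlyOn_of_tendsto_of_subset_closure {ι X α : Type*}
    [TopologicalSpace X] [UniformSpace α] {l : Filter ι} {F : ι → X → α} {f : X → α} {D c : Set X}
    (hD : IsCompact D) (hF : Equicontinuous F) (hf : Continuous f) (hDc : D ⊆ closure c)
    (hc : ∀ x ∈ c, Tendsto (F · x) l (𝓝 (f x))) :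
    TendstoUniformlyOn F f l D := by
  have hpt : ∀ x ∈ D, Tendsto (F · x) l (𝓝 (f x)) := fun x hx =>
    closure_minimal hc (hF.isClosed_setOfPred_tendsto hf) (hDc hx)
  refine (UniformOnFun.tendsto_iff_tendstoUniformlyOn (𝔖 := {D})
    (F := UniformOnFun.ofFun {D} ∘ F) (f := UniformOnFun.ofFun {D} f)).1 ?_ D rfl
  rw [EquicontinuousOn.tendsto_uniformOnFun_iff_pi' (by simpa using hD)
    (by simpa using hF.equicontinuousOn D), tendsto_pi_nhds]
  rintro ⟨x, hx⟩
  exact hpt x (by simpa using hx)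

theorem TendstoUniformlyOn.tendsto_apply_of_isMinOn {ι X : Type*} {l : Filter ι}
    {F : ι → X → ℝ} {f : X → ℝ} {D : Set X} (hF : TendstoUniformlyOn F f l D) {x₀ : X}
    (hx₀ : x₀ ∈ D) (hmin : IsMinOn f D x₀) {x : ι → X} (hx : ∀ i, x i ∈ D)
    (hxmin : ∀ i, IsMinOn (F i) D (x i)) :
    Tendsto (fun i => f (x i)) l (𝓝 (f x₀)) := by
  refine tendsto_order.2 ⟨fun a ha => .of_forall fun i => ha.trans_le (hmin (hx i)), fun b hb => ?_⟩
  filter_upwards [Metric.tendstoUniformlyOn_iff.1 hF ((b - f x₀) / 2) (by linarith)] with i hi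
  have h₁ := (abs_lt.1 (hi (x i) (hx i))).2
  have h₂ := (abs_lt.1 (hi x₀ hx₀)).1
  have h₃ : F i (x i) ≤ F i x₀ := hxmin i hx₀
  linarith

noncomputable def empiricalMean {K : Type*} (x : ℕ → K) (M : ℕ) (f : K → ℝ) : ℝ :=
  (M : ℝ)⁻¹ * ∑ i ∈ Finset.range M, f (x i)

theorem ae_tendsto_empiricalMean {K Ω : Type*} [MeasurableSpace K] [MeasurableSpace Ω]
    {P : Measure Ω} {ν : Measure K} {η : ℕ → Ω → K} (hmeas : ∀ i, Measurable (η i))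
    (hindep : Pairwise fun i j => IndepFun (η i) (η j) P) (hlaw : ∀ i, P.map (η i) = ν)
    {f : K → ℝ} (hf : Measurable f) (hfi : Integrable f ν) :
    ∀ᵐ ω ∂P, Tendsto (fun M => empiricalMean (η · ω) M f) atTop (𝓝 (∫ x, f x ∂ν)) := by
  have hident : ∀ i, IdentDistrib (f ∘ η i) (f ∘ η 0) P P := fun i =>
    IdentDistrib.comp ⟨(hmeas i).aemeasurable, (hmeas 0).aemeasurable, by rw [hlaw, hlaw]⟩ hf
  have hint : Integrable (f ∘ η 0) P :=
    (integrable_map_measure hf.aestronglyMeasurable (hmeas 0).aemeasurable).1 (hlaw 0 ▸ hfi)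
  have hmean : ∫ ω, (f ∘ η 0) ω ∂P = ∫ x, f x ∂ν := by
    rw [← hlaw 0, integral_map (hmeas 0).aemeasurable hf.aestronglyMeasurable]
    rfl
  filter_upwards [strong_law_ae_real (fun i => f ∘ η i) hint
    (fun i j hij => (hindep hij).comp hf hf) hident] with ω hω
  rw [← hmean]
  simpa [empiricalMean, div_eq_inv_mul] using hω

section CompactSpace

variable {K : Type*} [TopologicalSpace K] [CompactSpace K]

theorem lipschitzWith_one_empiricalMean (x : ℕ → K) (M : ℕ) :
    LipschitzWith 1 fun f : C(K, ℝ) => empiricalMean x M f := by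
  refine LipschitzWith.of_dist_le_mul fun f g => ?_
  rcases M.eq_zero_or_pos with rfl | hM
  · simp [empiricalMean]
  rw [NNReal.coe_one, one_mul, Real.dist_eq, empiricalMean, empiricalMean, ← mul_sub,
    ← Finset.sum_sub_distrib, abs_mul, abs_of_pos (by positivity), inv_mul_le_iff₀ (by positivity)]
  calc |∑ i ∈ Finset.range M, (f (x i) - g (x i))|
      ≤ ∑ i ∈ Finset.range M, |f (x i) - g (x i)| := Finset.abs_sum_le_sum_abs _ _
    _ ≤ ∑ _i ∈ Finset.range M, dist f g := Finset.sum_le_sum fun i _ =>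
        f.dist_apply_le_dist (x i)
    _ = M * dist f g := by simp

variable [MeasurableSpace K] [OpensMeasurableSpace K]

theorem lipschitzWith_one_integral (ν : Measure K) [IsProbabilityMeasure ν] :
    LipschitzWith 1 fun f : C(K, ℝ) => ∫ x, f x ∂ν := by
  refine LipschitzWith.of_dist_le_mul fun f g => ?_
  have hint : ∀ h : C(K, ℝ), Integrable h ν := fun h =>
    (BoundedContinuousFunction.mkOfCompact h).integrable ν
  rw [NNReal.coe_one, one_mul, Real.dist_eq, ← integral_sub (hint f) (hint g), dist_eq_norm]
  simpa using norm_integral_le_of_norm_le_const (μ := ν)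
    (.of_forall fun x => (f - g).norm_coe_le_norm x)

theorem ae_tendstoUniformlyOn_empiricalMean {Ω : Type*} [MeasurableSpace Ω] {P : Measure Ω}
    {ν : Measure K} [IsProbabilityMeasure ν] {η : ℕ → Ω → K} (hmeas : ∀ i, Measurable (η i))
    (hindep : Pairwise fun i j => IndepFun (η i) (η j) P) (hlaw : ∀ i, P.map (η i) = ν)
    {D : Set C(K, ℝ)} (hD : IsCompact D) :
    ∀ᵐ ω ∂P, TendstoUniformlyOn (fun M (f : C(K, ℝ)) => empiricalMean (η · ω) M f)
      (fun f => ∫ x, f x ∂ν) atTop D := by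
  obtain ⟨c, hc, hDc⟩ := hD.isSeparable
  have hae : ∀ᵐ ω ∂P, ∀ f ∈ c,
      Tendsto (fun M => empiricalMean (η · ω) M f) atTop (𝓝 (∫ x, f x ∂ν)) :=
    (ae_ball_iff hc).2 fun f _ => ae_tendsto_empiricalMean hmeas hindep hlaw
      f.continuous.measurable ((BoundedContinuousFunction.mkOfCompact f).integrable ν)
  filter_upwards [hae] with ω hω
  have hequi : Equicontinuous fun M (f : C(K, ℝ)) => empiricalMean (η · ω) M f :=
    (LipschitzWith.uniformEquicontinuous _ 1 fun M =>
      lipschitzWith_one_empiricalMean _ M).equicontinuous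
  exact hequi.tendstoUniformlyOn_of_tendsto_of_subset_closure hD
    (lipschitzWith_one_integral ν).continuous hDc hω

end CompactSpace

theorem stmt_2_general {K : Type*} [MetricSpace K] [CompactSpace K]
    [MeasurableSpace K] [BorelSpace K]
    (D : Set C(K, ℝ)) (hD : IsCompact D)
    (ν : Measure K) [IsProbabilityMeasure ν]
    {Ω : Type*} [MeasurableSpace Ω] (P : Measure Ω)
    (η : ℕ → Ω → K) (hmeas : ∀ i, Measurable (η i))
    (hindep : iIndepFun η P)
    (hlaw : ∀ i, Measure.map (η i) P = ν)
    (fstar : C(K, ℝ)) (hfstar : fstar ∈ D)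
    (hfstar_min : ∀ f ∈ D, ∫ x, fstar x ∂ν ≤ ∫ x, f x ∂ν)
    (fM : ℕ → Ω → C(K, ℝ))
    (hfM : ∀ M ω, fM M ω ∈ D)
    (hfM_min : ∀ (M : ℕ) (ω : Ω), ∀ f ∈ D,
      (M : ℝ)⁻¹ * ∑ i ∈ Finset.range M, (fM M ω) (η i ω)
        ≤ (M : ℝ)⁻¹ * ∑ i ∈ Finset.range M, f (η i ω)) :
    ∀ᵐ ω ∂P, Tendsto (fun M : ℕ => ∫ x, (fM M ω) x ∂ν) atTop
      (nhds (∫ x, fstar x ∂ν)) := by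
  filter_upwards [ae_tendstoUniformlyOn_empiricalMean hmeas
    (fun _ _ hij => hindep.indepFun hij) hlaw hD] with ω hω
  exact hω.tendsto_apply_of_isMinOn hfstar (isMinOn_iff.2 hfstar_min)
    (hfM · ω) fun M => isMinOn_iff.2 (hfM_min M ω)

/-- Consistency of empirical minimizers over a compact function class:
the expected value of the empirical minimizer converges a.s. to the optimal value. -/
theorem stmt_2 {K : Type*} [MetricSpace K] [CompactSpace K]
    [MeasurableSpace K] [BorelSpace K]
    (D : Set C(K, ℝ)) (hDne : D.Nonempty) (hD : IsCompact D)
    (ν : Measure K) [IsProbabilityMeasure ν]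
    {Ω : Type*} [MeasurableSpace Ω] (P : Measure Ω) [IsProbabilityMeasure P]
    (η : ℕ → Ω → K) (hmeas : ∀ i, Measurable (η i))
    (hindep : iIndepFun η P)
    (hlaw : ∀ i, Measure.map (η i) P = ν)
    (fstar : C(K, ℝ)) (hfstar : fstar ∈ D)
    (hfstar_min : ∀ f ∈ D, ∫ x, fstar x ∂ν ≤ ∫ x, f x ∂ν)
    (fM : ℕ → Ω → C(K, ℝ))
    (hfM : ∀ M ω, fM M ω ∈ D)
    (hfM_min : ∀ (M : ℕ) (ω : Ω), ∀ f ∈ D,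
      (M : ℝ)⁻¹ * ∑ i ∈ Finset.range M, (fM M ω) (η i ω)
        ≤ (M : ℝ)⁻¹ * ∑ i ∈ Finset.range M, f (η i ω)) :
    ∀ᵐ ω ∂P, Tendsto (fun M : ℕ => ∫ x, (fM M ω) x ∂ν) atTop
      (nhds (∫ x, fstar x ∂ν)) :=
  stmt_2_general D hD ν P η hmeas hindep hlaw fstar hfstar hfstar_min fM hfM hfM_min
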